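/- arXiv:0712.2629 — 3 statements merged into one kernel-verified Lean document; each statement's English description precedes it below -/
import Mathlib

section
/- Let n ≥ 1 and let G be a reduced instance of the line highway problem with [s,ℓ]-valuation, with customers e_1,...,e_m and integer valuations w_1,...,w_m ∈ [s,ℓ]. For each partial-sum vector σ = (σ_0, σ_1, ..., σ_n) with each σ_i an integer in {0,1,...,ℓ}, define the price vector p^σ ∈ ℝ^n by p^σ_i = σ_i − σ_{i−1}. Then the average profit over all (ℓ+1)^{n+1} partial-sum vectors satisfies: for every price vector q ∈ ℝ^n, (1/(ℓ+1)^{n+1}) · Σ_σ Profit(p^σ) ≥ c(r) · Profit(q), where r = s/ℓ, and c(r) = r/3 if 0 < r ≤ 1/2, and c(r) = 1/6 if 1/2 < r ≤ 1. -/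
lemma hwTelescope {n : ℕ} (g : Fin (n+1) → ℝ) (a b : Fin n) (hab : a ≤ b) :
    ∑ i ∈ Finset.Icc a b, (g i.succ - g i.castSucc) = g b.succ - g a.castSucc := by
  set G : ℕ → ℝ := fun k => g ⟨min k n, by omega⟩ with hG
  have h1 : ∀ i : Fin n, g i.succ - g i.castSucc = G (i.val + 1) - G i.val := by
    intro i
    have hi := i.isLt
    have e1 : G (i.val + 1) = g i.succ := by
      simp only [hG]; congr 1; ext; simp [Nat.min_eq_left (by omega : i.val + 1 ≤ n)]
    have e2 : G i.val = g i.castSucc := by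
      simp only [hG]; congr 1; ext; simp [Nat.min_eq_left (by omega : i.val ≤ n)]
    rw [e1, e2]
  calc ∑ i ∈ Finset.Icc a b, (g i.succ - g i.castSucc)
      = ∑ i ∈ Finset.Icc a b, (G (i.val+1) - G i.val) := Finset.sum_congr rfl (fun i _ => h1 i)
    _ = ∑ k ∈ Finset.Icc (a:ℕ) (b:ℕ), (G (k+1) - G k) := by
        rw [← Fin.map_valEmbedding_Icc, Finset.sum_map]; rfl
    _ = g b.succ - g a.castSucc := by
        have : Finset.Icc (a:ℕ) (b:ℕ) = Finset.Ico (a:ℕ) ((b:ℕ)+1) := by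
          ext k; simp [Nat.lt_succ_iff]
        rw [this, Finset.sum_Ico_eq_sub _ (by omega), Finset.sum_range_sub G,
          Finset.sum_range_sub G]
        have hb := b.isLt
        have ha := a.isLt
        have e1 : G ((b:ℕ)+1) = g b.succ := by
          simp only [hG]; congr 1; ext; simp [Nat.min_eq_left (by omega : (b:ℕ)+1 ≤ n)]
        have e2 : G (a:ℕ) = g a.castSucc := by
          simp only [hG]; congr 1; ext; simp [Nat.min_eq_left (by omega : (a:ℕ) ≤ n)]
        rw [e1, e2]; ring

lemma hwSumEval {α β : Type*} [Fintype α] [DecidableEq α] [Fintype β] (A : α) (F : β → ℝ) :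
    ∑ f : α → β, F (f A) =
      (Fintype.card β : ℝ) ^ (Fintype.card α - 1) * ∑ y, F y := by
  rw [← (Equiv.funSplitAt A β).symm.sum_comp (fun f => F (f A))]
  rw [Fintype.sum_prod_type]
  have : ∀ (x : β) (g : {j // j ≠ A} → β), (Equiv.funSplitAt A β).symm (x, g) A = x := by
    intro x g; simp [Equiv.funSplitAt_symm_apply]
  simp_rw [this]
  rw [Finset.sum_comm, Finset.sum_const]
  simp [Fintype.card_fun, Fintype.card_subtype_compl, mul_comm]

lemma hwSumEval2 {α β : Type*} [Fintype α] [DecidableEq α] [Fintype β] (A B : α)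
    (hAB : A ≠ B) (F : β → β → ℝ) :
    ∑ f : α → β, F (f A) (f B) =
      (Fintype.card β : ℝ) ^ (Fintype.card α - 2) * ∑ x, ∑ y, F x y := by
  rw [← (Equiv.funSplitAt A β).symm.sum_comp (fun f => F (f A) (f B))]
  rw [Fintype.sum_prod_type]
  have h1 : ∀ (x : β) (g : {j // j ≠ A} → β),
      (Equiv.funSplitAt A β).symm (x, g) A = x := by
    intro x g; simp [Equiv.funSplitAt_symm_apply]
  have h2 : ∀ (x : β) (g : {j // j ≠ A} → β),
      (Equiv.funSplitAt A β).symm (x, g) B = g ⟨B, Ne.symm hAB⟩ := by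
    intro x g; simp [Equiv.funSplitAt_symm_apply, Ne.symm hAB]
  simp_rw [h1, h2]
  have h3 : ∀ x : β, ∑ g : {j // j ≠ A} → β, F x (g ⟨B, Ne.symm hAB⟩) =
      (Fintype.card β : ℝ) ^ (Fintype.card {j // j ≠ A} - 1) * ∑ y, F x y :=
    fun x => hwSumEval (⟨B, Ne.symm hAB⟩ : {j // j ≠ A}) (F x)
  simp_rw [h3]
  rw [← Finset.mul_sum]
  congr 2
  have : Fintype.card {j // j ≠ A} = Fintype.card α - 1 := by
    simp [Fintype.card_subtype_compl]
  omega

lemma hwGauss1 (m : ℕ) : ∑ i ∈ Finset.range m, ((i : ℝ) + 1) = m * (m + 1) / 2 := by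
  induction m with
  | zero => simp
  | succ k ih => rw [Finset.sum_range_succ, ih]; push_cast; ring

lemma hwGauss2 (w : ℕ) :
    ∑ m ∈ Finset.range w, ((m : ℝ) * ((m:ℝ) + 1) / 2) = ((w:ℝ) - 1) * w * (w + 1) / 6 := by
  induction w with
  | zero => simp
  | succ k ih => rw [Finset.sum_range_succ, ih]; push_cast; ring

lemma hwInnerSum (ℓ w x : ℕ) (hx : x ≤ ℓ) :
    ∑ y ∈ Finset.range (ℓ+1), (if (y : ℝ) - (x : ℝ) ≤ (w : ℝ) then max ((y:ℝ) - x) 0 else 0)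
      = ((min (ℓ - x) w : ℕ) : ℝ) * (((min (ℓ - x) w : ℕ) : ℝ) + 1) / 2 := by
  set m := min (ℓ - x) w with hm
  have step : ∀ y ∈ Finset.range (ℓ+1),
      (if (y : ℝ) - (x : ℝ) ≤ (w : ℝ) then max ((y:ℝ) - x) 0 else 0)
        = (if x < y ∧ y ≤ x + w then ((y:ℝ) - x) else 0) := by
    intro y hy
    by_cases h1 : x < y ∧ y ≤ x + w
    · have c1 : (y:ℝ) ≤ (x:ℝ) + (w:ℝ) := by exact_mod_cast h1.2
      have c2 : (x:ℝ) < (y:ℝ) := by exact_mod_cast h1.1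
      rw [if_pos h1, if_pos (by linarith)]
      exact max_eq_left (by linarith)
    · rw [if_neg h1]
      by_cases h2 : (y : ℝ) - (x : ℝ) ≤ (w : ℝ)
      · rw [if_pos h2]
        have hyx : y ≤ x := by
          by_contra hc
          exact h1 ⟨by omega, by exact_mod_cast (by linarith : (y:ℝ) ≤ (x:ℝ) + (w:ℝ))⟩
        have : (y:ℝ) ≤ (x:ℝ) := by exact_mod_cast hyx
        exact max_eq_right (by linarith)
      · rw [if_neg h2]
  rw [Finset.sum_congr rfl step, Finset.sum_ite, Finset.sum_const_zero, add_zero]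
  have hfil : (Finset.range (ℓ+1)).filter (fun y => x < y ∧ y ≤ x + w)
      = Finset.Ico (x+1) (x+1+m) := by
    ext y; simp only [Finset.mem_filter, Finset.mem_range, Finset.mem_Ico]; omega
  rw [hfil, Finset.sum_Ico_eq_sum_range]
  have hlen : x + 1 + m - (x + 1) = m := by omega
  rw [hlen]
  have : ∀ i ∈ Finset.range m, ((x + 1 + i : ℕ) : ℝ) - (x:ℝ) = (i:ℝ) + 1 := by
    intro i _; push_cast; ring
  rw [Finset.sum_congr rfl this, hwGauss1]

lemma hwOuterSum (ℓ w : ℕ) (hw1 : 1 ≤ w) (hw : w ≤ ℓ) :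
    ∑ x ∈ Finset.range (ℓ+1), (((min (ℓ - x) w : ℕ) : ℝ) * (((min (ℓ - x) w : ℕ) : ℝ) + 1) / 2)
      = (w:ℝ) * ((w:ℝ)+1) * (3*(ℓ:ℝ)+2-2*(w:ℝ)) / 6 := by
  set f : ℕ → ℝ := fun m => ((m:ℕ) : ℝ) * (((m:ℕ) : ℝ) + 1) / 2 with hf
  have hsplit : ∑ x ∈ Finset.Ico 0 (ℓ+1-w), f (min (ℓ - x) w)
      + ∑ x ∈ Finset.Ico (ℓ+1-w) (ℓ+1), f (min (ℓ - x) w)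
      = ∑ x ∈ Finset.Ico 0 (ℓ+1), f (min (ℓ - x) w) :=
    Finset.sum_Ico_consecutive _ (by omega) (by omega)
  rw [Finset.range_eq_Ico, ← hsplit]
  have h1 : ∑ x ∈ Finset.Ico 0 (ℓ+1-w), f (min (ℓ - x) w)
      = ((ℓ+1-w : ℕ) : ℝ) * ((w:ℝ) * ((w:ℝ)+1) / 2) := by
    have hc : ∀ x ∈ Finset.Ico 0 (ℓ+1-w), f (min (ℓ - x) w) = f w := by
      intro x hx
      have hx' : x < ℓ + 1 - w := (Finset.mem_Ico.mp hx).2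
      have : min (ℓ - x) w = w := by omega
      rw [this]
    rw [Finset.sum_congr rfl hc, Finset.sum_const, Nat.card_Ico, nsmul_eq_mul, hf]
    norm_num
  have h2 : ∑ x ∈ Finset.Ico (ℓ+1-w) (ℓ+1), f (min (ℓ - x) w)
      = ((w:ℝ) - 1) * w * (w + 1) / 6 := by
    rw [Finset.sum_Ico_eq_sum_range]
    have hlen : ℓ + 1 - (ℓ + 1 - w) = w := by omega
    rw [hlen]
    have hcong : ∀ i ∈ Finset.range w, f (min (ℓ - (ℓ+1-w+i)) w) = f (w - 1 - i) := by
      intro i hi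
      have hi' : i < w := Finset.mem_range.mp hi
      have : min (ℓ - (ℓ+1-w+i)) w = w - 1 - i := by omega
      rw [this]
    rw [Finset.sum_congr rfl hcong, Finset.sum_range_reflect f w, hf]
    exact hwGauss2 w
  rw [h1, h2]
  have hc2 : ((ℓ+1-w : ℕ) : ℝ) = (ℓ:ℝ) + 1 - w := by
    have hle : w ≤ ℓ + 1 := by omega
    push_cast [hle]; ring
  rw [hc2]; ring

lemma hwKeySum (ℓ w : ℕ) (hw1 : 1 ≤ w) (hw : w ≤ ℓ) :
    ∑ x : Fin (ℓ+1), ∑ y : Fin (ℓ+1),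
      (if ((y:ℕ):ℝ) - ((x:ℕ):ℝ) ≤ (w:ℝ) then max (((y:ℕ):ℝ) - ((x:ℕ):ℝ)) 0 else 0)
    = (w:ℝ) * ((w:ℝ)+1) * (3*(ℓ:ℝ)+2-2*(w:ℝ)) / 6 := by
  have houter : ∑ x : Fin (ℓ+1), ∑ y : Fin (ℓ+1),
      (if ((y:ℕ):ℝ) - ((x:ℕ):ℝ) ≤ (w:ℝ) then max (((y:ℕ):ℝ) - ((x:ℕ):ℝ)) 0 else 0)
      = ∑ x ∈ Finset.range (ℓ+1), ∑ y : Fin (ℓ+1),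
      (if ((y:ℕ):ℝ) - ((x:ℕ):ℝ) ≤ (w:ℝ) then max (((y:ℕ):ℝ) - ((x:ℕ):ℝ)) 0 else 0) :=
    Fin.sum_univ_eq_sum_range (fun x : ℕ => ∑ y : Fin (ℓ+1),
      (if ((y:ℕ):ℝ) - ((x:ℕ):ℝ) ≤ (w:ℝ) then max (((y:ℕ):ℝ) - ((x:ℕ):ℝ)) 0 else 0)) (ℓ+1)
  rw [houter]
  have hinner : ∀ x ∈ Finset.range (ℓ+1), (∑ y : Fin (ℓ+1),
      (if ((y:ℕ):ℝ) - ((x:ℕ):ℝ) ≤ (w:ℝ) then max (((y:ℕ):ℝ) - ((x:ℕ):ℝ)) 0 else 0))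
      = ((min (ℓ - x) w : ℕ) : ℝ) * (((min (ℓ - x) w : ℕ) : ℝ) + 1) / 2 := by
    intro x hx
    rw [Fin.sum_univ_eq_sum_range
      (fun y => if ((y:ℕ):ℝ) - ((x:ℕ):ℝ) ≤ (w:ℝ) then max (((y:ℕ):ℝ) - ((x:ℕ):ℝ)) 0 else 0)
      (ℓ+1)]
    exact hwInnerSum ℓ w x (by simpa [Nat.lt_succ_iff] using hx)
  rw [Finset.sum_congr rfl hinner]
  exact hwOuterSum ℓ w hw1 hw

lemma hwCase1 (s l w : ℝ) (h1 : 1 ≤ s) (h2 : s ≤ w) (h3 : w ≤ l) (h4 : 2*s ≤ l) :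
    l*(w+1)*(3*l+2-2*w) ≥ 2*s*(l+1)^2 := by
  nlinarith [mul_nonneg (by linarith : (0:ℝ) ≤ w - s) (by linarith : (0:ℝ) ≤ l - w),
    mul_nonneg (mul_nonneg (by linarith : (0:ℝ) ≤ l) (by linarith : (0:ℝ) ≤ w - s)) (by linarith : (0:ℝ) ≤ l - w),
    mul_nonneg (mul_nonneg (by linarith : (0:ℝ) ≤ l) (by linarith : (0:ℝ) ≤ s + 1)) (by linarith : (0:ℝ) ≤ l - 2*s),
    mul_nonneg (by linarith : (0:ℝ) ≤ l - s) (by linarith : (0:ℝ) ≤ l - w),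
    mul_nonneg (by linarith : (0:ℝ) ≤ l + 1) (by linarith : (0:ℝ) ≤ l - s)]

lemma hwCase2 (s l w : ℝ) (h1 : 1 ≤ s) (h2 : s ≤ w) (h3 : w ≤ l) (h4 : l + 1 ≤ 2*s) :
    (w+1)*(3*l+2-2*w) ≥ (l+1)^2 := by
  nlinarith [mul_nonneg (by linarith : (0:ℝ) ≤ 2*w - l - 1) (by linarith : (0:ℝ) ≤ l - w)]

/-- Per-customer expectation bound. -/
lemma hwPerCustomer (s ℓ u : ℕ) (hs : 1 ≤ s) (h1 : s ≤ u) (h2 : u ≤ ℓ) :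
    (u:ℝ) * ((u:ℝ)+1) * (3*(ℓ:ℝ)+2-2*(u:ℝ)) / 6
      ≥ (if (s : ℝ) / (ℓ : ℝ) ≤ 1 / 2 then ((s : ℝ) / (ℓ : ℝ)) / 3 else 1 / 6)
        * ((ℓ:ℝ)+1)^2 * u := by
  have hl1 : 1 ≤ ℓ := le_trans (le_trans hs h1) h2
  have hlpos : (0:ℝ) < ℓ := by exact_mod_cast hl1
  have hsr : (1:ℝ) ≤ s := by exact_mod_cast hs
  have hsu : (s:ℝ) ≤ u := by exact_mod_cast h1
  have hul : (u:ℝ) ≤ ℓ := by exact_mod_cast h2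
  have hu0 : (0:ℝ) ≤ u := by positivity
  split_ifs with h
  · have h2s : 2*(s:ℝ) ≤ ℓ := by
      rw [div_le_iff₀ hlpos] at h; linarith
    have key := hwCase1 (s:ℝ) (ℓ:ℝ) (u:ℝ) hsr hsu hul h2s
    have key2 := mul_le_mul_of_nonneg_right key hu0
    have heq : ((s:ℝ)/(ℓ:ℝ))/3 * ((ℓ:ℝ)+1)^2 * u = (s:ℝ) * ((ℓ:ℝ)+1)^2 * u / (3*ℓ) := by
      rw [div_div, div_mul_eq_mul_div, div_mul_eq_mul_div, mul_comm (ℓ:ℝ) 3]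
    rw [ge_iff_le, heq, div_le_div_iff₀ (by positivity) (by norm_num)]
    nlinarith [key2]
  · have h2s : (ℓ:ℝ) + 1 ≤ 2*s := by
      push_neg at h
      rw [lt_div_iff₀ hlpos] at h
      have : ℓ < 2*s := by exact_mod_cast (by linarith : (ℓ:ℝ) < 2*(s:ℝ))
      exact_mod_cast this
    have key := hwCase2 (s:ℝ) (ℓ:ℝ) (u:ℝ) hsr hsu hul h2s
    have key2 := mul_le_mul_of_nonneg_right key hu0
    rw [ge_iff_le]
    nlinarith [key2]

/-- The profit, under the coupon model, of a price vector `p` on items of type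
`ι`, given customers `j : κ` with bundles `e j` and valuations `w j`:
`Profit(p) = Σ_{j : p(e_j) ≤ w_j} max(p(e_j), 0)`. -/
noncomputable def couponProfit {ι κ : Type*} [Fintype κ] (e : κ → Finset ι)
    (w : κ → ℝ) (p : ι → ℝ) : ℝ :=
  ∑ j, if (∑ i ∈ e j, p i) ≤ w j then max (∑ i ∈ e j, p i) 0 else 0

/-- For a reduced instance of the line highway problem with
`[s,ℓ]`-valuation on `n ≥ 1` items (customer `j` is the interval
`Finset.Icc (a j) (b j)` with integer valuation `w j ∈ [s,ℓ]`), consider, for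
each partial-sum vector `σ = (σ_0, …, σ_n)` with entries in `{0,…,ℓ}`
(realized as `σ : Fin (n+1) → Fin (ℓ+1)`), the price vector
`p^σ_i = σ_i - σ_{i-1}`.  The average profit over all `(ℓ+1)^{n+1}`
partial-sum vectors is at least `c(r) · Profit(q)` for every price vector
`q ∈ ℝ^n`, where `r = s/ℓ` and `c(r) = r/3` if `r ≤ 1/2`, `c(r) = 1/6`
otherwise. -/
theorem stmt_0 (n m s ℓ : ℕ) (hn : 1 ≤ n) (hs : 1 ≤ s) (hsl : s ≤ ℓ)
    (a b : Fin m → Fin n) (hab : ∀ j, a j ≤ b j)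
    (w : Fin m → ℕ) (hw : ∀ j, s ≤ w j ∧ w j ≤ ℓ)
    (q : Fin n → ℝ) :
    (1 / ((ℓ : ℝ) + 1) ^ (n + 1)) *
        ∑ σ : Fin (n + 1) → Fin (ℓ + 1),
          couponProfit (fun j => Finset.Icc (a j) (b j)) (fun j => (w j : ℝ))
            (fun i => ((σ i.succ : ℕ) : ℝ) - ((σ i.castSucc : ℕ) : ℝ)) ≥
      (if (s : ℝ) / (ℓ : ℝ) ≤ 1 / 2 then ((s : ℝ) / (ℓ : ℝ)) / 3 else 1 / 6) *
        couponProfit (fun j => Finset.Icc (a j) (b j)) (fun j => (w j : ℝ)) q := by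
  set c : ℝ := if (s : ℝ) / (ℓ : ℝ) ≤ 1 / 2 then ((s : ℝ) / (ℓ : ℝ)) / 3 else 1 / 6 with hc
  have hl1 : 1 ≤ ℓ := le_trans hs hsl
  have hc0 : 0 ≤ c := by
    rw [hc]; split_ifs
    · positivity
    · norm_num
  -- total sum over σ
  have htot : ∑ σ : Fin (n + 1) → Fin (ℓ + 1),
      couponProfit (fun j => Finset.Icc (a j) (b j)) (fun j => (w j : ℝ))
        (fun i => ((σ i.succ : ℕ) : ℝ) - ((σ i.castSucc : ℕ) : ℝ))
      = ∑ j : Fin m, ((ℓ:ℝ)+1) ^ (n-1) *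
          ((w j:ℝ) * ((w j:ℝ)+1) * (3*(ℓ:ℝ)+2-2*(w j:ℝ)) / 6) := by
    simp only [couponProfit]
    rw [Finset.sum_comm]
    refine Finset.sum_congr rfl (fun j _ => ?_)
    have hterm : ∀ σ : Fin (n + 1) → Fin (ℓ + 1),
        (∑ i ∈ Finset.Icc (a j) (b j),
          (((σ i.succ : ℕ) : ℝ) - ((σ i.castSucc : ℕ) : ℝ)))
        = ((σ ((b j).succ) : ℕ) : ℝ) - ((σ ((a j).castSucc) : ℕ) : ℝ) :=
      fun σ => hwTelescope (fun k => ((σ k : ℕ) : ℝ)) (a j) (b j) (hab j)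
    have hstep1 : ∑ σ : Fin (n + 1) → Fin (ℓ + 1),
        (if (∑ i ∈ Finset.Icc (a j) (b j),
            (((σ i.succ : ℕ) : ℝ) - ((σ i.castSucc : ℕ) : ℝ))) ≤ (w j : ℝ)
          then max (∑ i ∈ Finset.Icc (a j) (b j),
            (((σ i.succ : ℕ) : ℝ) - ((σ i.castSucc : ℕ) : ℝ))) 0 else 0)
        = ∑ σ : Fin (n + 1) → Fin (ℓ + 1),
          (fun x y : Fin (ℓ+1) =>
            if ((y:ℕ):ℝ) - ((x:ℕ):ℝ) ≤ (w j : ℝ)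
              then max (((y:ℕ):ℝ) - ((x:ℕ):ℝ)) 0 else 0)
            (σ ((a j).castSucc)) (σ ((b j).succ)) := by
      refine Finset.sum_congr rfl (fun σ _ => ?_)
      rw [hterm σ]
    rw [hstep1]
    have hne : ((a j).castSucc : Fin (n+1)) ≠ (b j).succ := by
      intro h
      have := congrArg Fin.val h
      simp only [Fin.coe_castSucc, Fin.val_succ] at this
      have := hab j
      omega
    rw [hwSumEval2 ((a j).castSucc) ((b j).succ) hne
      (fun x y : Fin (ℓ+1) =>
        if ((y:ℕ):ℝ) - ((x:ℕ):ℝ) ≤ (w j : ℝ)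
          then max (((y:ℕ):ℝ) - ((x:ℕ):ℝ)) 0 else 0)]
    simp only [Fintype.card_fin]
    rw [hwKeySum ℓ (w j) (le_trans hs (hw j).1) (hw j).2,
      show n + 1 - 2 = n - 1 from by omega]
    push_cast
    ring
  rw [htot, Finset.mul_sum]
  -- rewrite each term as V_j / (ℓ+1)^2
  have hLpos : (0:ℝ) < (ℓ:ℝ) + 1 := by positivity
  have hpow : ((ℓ:ℝ)+1) ^ (n+1) = ((ℓ:ℝ)+1) ^ (n-1) * ((ℓ:ℝ)+1)^2 := by
    rw [← pow_add]; congr 1; omega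
  have hterm2 : ∀ j : Fin m,
      (1 / ((ℓ : ℝ) + 1) ^ (n + 1)) * (((ℓ:ℝ)+1) ^ (n-1) *
        ((w j:ℝ) * ((w j:ℝ)+1) * (3*(ℓ:ℝ)+2-2*(w j:ℝ)) / 6))
      = ((w j:ℝ) * ((w j:ℝ)+1) * (3*(ℓ:ℝ)+2-2*(w j:ℝ)) / 6) / ((ℓ:ℝ)+1)^2 := by
    intro j
    rw [hpow]
    have h1 : ((ℓ:ℝ)+1) ^ (n-1) ≠ 0 := by positivity
    have h2 : ((ℓ:ℝ)+1) ^ 2 ≠ 0 := by positivity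
    field_simp
  rw [Finset.sum_congr rfl (fun j _ => hterm2 j)]
  -- lower bound each term by c * w j
  have hlow : ∀ j ∈ Finset.univ, c * (w j : ℝ) ≤
      ((w j:ℝ) * ((w j:ℝ)+1) * (3*(ℓ:ℝ)+2-2*(w j:ℝ)) / 6) / ((ℓ:ℝ)+1)^2 := by
    intro j _
    have := hwPerCustomer s ℓ (w j) hs (hw j).1 (hw j).2
    rw [hc]
    rw [ge_iff_le] at this
    rw [le_div_iff₀ (by positivity : (0:ℝ) < ((ℓ:ℝ)+1)^2)]
    calc c * (w j:ℝ) * ((ℓ:ℝ)+1)^2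
        = c * ((ℓ:ℝ)+1)^2 * (w j:ℝ) := by ring
      _ ≤ _ := this
  have hsum1 : ∑ j : Fin m, c * (w j : ℝ) ≤
      ∑ j : Fin m, ((w j:ℝ) * ((w j:ℝ)+1) * (3*(ℓ:ℝ)+2-2*(w j:ℝ)) / 6) / ((ℓ:ℝ)+1)^2 :=
    Finset.sum_le_sum hlow
  -- Profit(q) ≤ ∑ w j
  have hprofit : couponProfit (fun j => Finset.Icc (a j) (b j)) (fun j => (w j : ℝ)) q
      ≤ ∑ j : Fin m, (w j : ℝ) := by
    simp only [couponProfit]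
    refine Finset.sum_le_sum (fun j _ => ?_)
    have hw0 : (0:ℝ) ≤ (w j : ℝ) := by positivity
    split_ifs with h
    · exact max_le h hw0
    · exact hw0
  calc c * couponProfit (fun j => Finset.Icc (a j) (b j)) (fun j => (w j : ℝ)) q
      ≤ c * ∑ j : Fin m, (w j : ℝ) := mul_le_mul_of_nonneg_left hprofit hc0
    _ = ∑ j : Fin m, c * (w j : ℝ) := Finset.mul_sum _ _ _
    _ ≤ _ := hsum1
end

section
/- Let s, x, ℓ be integers with 1 ≤ s ≤ x ≤ ℓ, and set f(x) = (x+1)(3ℓ − 2x + 2). If ℓ ≥ 2s, then f(x)/(6(ℓ+1)²) ≥ s/(3ℓ); if s ≤ ℓ < 2s, then f(x)/(6(ℓ+1)²) ≥ 1/6. -/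
/-- For integers `1 ≤ s ≤ x ≤ ℓ` and `f(x) = (x+1)(3ℓ - 2x + 2)`:
if `ℓ ≥ 2s` then `f(x)/(6(ℓ+1)²) ≥ s/(3ℓ)`, and if `ℓ < 2s` then
`f(x)/(6(ℓ+1)²) ≥ 1/6`. -/
theorem stmt_2 (s x ℓ : ℤ) (h1 : 1 ≤ s) (h2 : s ≤ x) (h3 : x ≤ ℓ) :
    (ℓ ≥ 2 * s →
      ((x : ℝ) + 1) * (3 * (ℓ : ℝ) - 2 * (x : ℝ) + 2) / (6 * ((ℓ : ℝ) + 1) ^ 2) ≥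
        (s : ℝ) / (3 * (ℓ : ℝ))) ∧
    (ℓ < 2 * s →
      ((x : ℝ) + 1) * (3 * (ℓ : ℝ) - 2 * (x : ℝ) + 2) / (6 * ((ℓ : ℝ) + 1) ^ 2) ≥
        1 / 6) := by
  have hs : (1 : ℝ) ≤ (s : ℝ) := by exact_mod_cast h1
  have hsx : (s : ℝ) ≤ (x : ℝ) := by exact_mod_cast h2
  have hxl : (x : ℝ) ≤ (ℓ : ℝ) := by exact_mod_cast h3
  have hl1 : (1 : ℝ) ≤ (ℓ : ℝ) := le_trans hs (le_trans hsx hxl)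
  have hden : (0 : ℝ) < 6 * ((ℓ : ℝ) + 1) ^ 2 := by positivity
  have hprod : (0 : ℝ) ≤ ((x : ℝ) - s) * ((ℓ : ℝ) - x) := by
    apply mul_nonneg <;> linarith
  constructor
  · intro hge
    have hge' : (2 : ℝ) * s ≤ (ℓ : ℝ) := by exact_mod_cast hge
    have hl : (0 : ℝ) < 3 * (ℓ : ℝ) := by linarith
    rw [ge_iff_le, div_le_div_iff₀ hl hden]
    nlinarith [hprod, sq_nonneg ((ℓ:ℝ) - x), sq_nonneg ((x:ℝ) - s),
      mul_nonneg hprod (by linarith : (0:ℝ) ≤ (ℓ:ℝ)),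
      mul_nonneg (by linarith : (0:ℝ) ≤ (ℓ:ℝ) - 2*s) (by linarith : (0:ℝ) ≤ (ℓ:ℝ)),
      mul_nonneg (mul_nonneg (by linarith : (0:ℝ) ≤ (ℓ:ℝ) - 2*s) (by linarith : (0:ℝ) ≤ (ℓ:ℝ))) (by linarith : (0:ℝ) ≤ (ℓ:ℝ) - x),
      mul_nonneg (mul_nonneg (by linarith : (0:ℝ) ≤ (ℓ:ℝ) - 2*s) (by linarith : (0:ℝ) ≤ (ℓ:ℝ))) (by linarith : (0:ℝ) ≤ (x:ℝ) - s)]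
  · intro hlt
    have hlt' : (ℓ : ℝ) < 2 * s := by exact_mod_cast hlt
    rw [ge_iff_le, div_le_div_iff₀ (by norm_num : (0:ℝ) < 6) hden]
    nlinarith [hprod, mul_nonneg hprod (by linarith : (0:ℝ) ≤ (s:ℝ)),
      mul_nonneg (by linarith : (0:ℝ) ≤ 2*(s:ℝ) - ℓ) (by linarith : (0:ℝ) ≤ (s:ℝ) - 1),
      mul_nonneg (by linarith : (0:ℝ) ≤ (ℓ:ℝ) - s) (by linarith : (0:ℝ) ≤ (s:ℝ) - 1)]
end

section
/- Let n ≥ 1, let s ≤ ℓ be positive integers, and let e_1,...,e_m ⊆ {1,...,n} be intervals with integer valuations w_j ∈ [s,ℓ]. For a subset S ⊆ {0,1,...,n} and an integer x ∈ [s,ℓ], define the partial sums σ_i = 0 for i ∈ S and σ_i = x for i ∉ S (i = 0,1,...,n), and the price vector p^{S,x} ∈ ℝ^n by p^{S,x}_i = σ_i − σ_{i−1}. Then the average over all 2^{n+1} subsets S ⊆ {0,1,...,n} of max_{s ≤ x ≤ ℓ} Profit(p^{S,x}) is at least Profit(q) / (4(1 − ln(s/ℓ))) for every price vector q ∈ ℝ^n.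 -/
open Finset

theorem couponProfit_le_sum {ι κ : Type*} [Fintype κ] (e : κ → Finset ι) (w : κ → ℝ)
    (hw : ∀ j, 0 ≤ w j) (p : ι → ℝ) : couponProfit e w p ≤ ∑ j, w j := by
  refine sum_le_sum fun j _ => ?_
  split_ifs with h
  · exact max_le h (hw j)
  · exact hw j

theorem card_filter_mem_and_notMem_mul_four {α : Type*} [Fintype α] [DecidableEq α] {u v : α}
    (huv : u ≠ v) : 4 * #{S : Finset α | u ∈ S ∧ v ∉ S} = 2 ^ Fintype.card α := by
  have hcard : #{S : Finset α | u ∈ S ∧ v ∉ S} = #({u, v}ᶜ : Finset α).powerset := by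
    refine card_bij' (fun S _ => S \ {u, v}) (fun S _ => insert u S) ?_ ?_ ?_ ?_
    all_goals intro S hS; simp [subset_iff, Finset.ext_iff] at hS ⊢
    all_goals grind
  have h2 : 2 ≤ Fintype.card α := by simpa [card_pair huv] using card_le_univ {u, v}
  rw [hcard, card_powerset, card_compl, card_pair huv, show 4 = 2 ^ 2 by rfl, ← pow_add]
  congr 1
  omega

theorem sum_Ioc_inv_le_log_sub {s ℓ : ℕ} (hs : 1 ≤ s) (hsl : s ≤ ℓ) :
    ∑ x ∈ Ioc s ℓ, (x : ℝ)⁻¹ ≤ Real.log ℓ - Real.log s := by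
  induction ℓ, hsl using Nat.le_induction with
  | base => simp
  | succ k hk ih =>
    have hk0 : (0 : ℝ) < k := by exact_mod_cast (by omega : 0 < k)
    have hstep : ((k + 1 : ℕ) : ℝ)⁻¹ ≤ Real.log (k + 1 : ℕ) - Real.log k := by
      have := Real.one_sub_inv_le_log_of_pos (x := (k + 1 : ℝ) / k) (by positivity)
      rw [Real.log_div (by positivity) hk0.ne', inv_div] at this
      push_cast
      convert this using 1
      field_simp
      ring
    rw [sum_Ioc_succ_top hk]
    linarith

theorem sum_eq_sum_Ioc_card_filter_le {κ : Type*} [Fintype κ] (w : κ → ℕ) {ℓ : ℕ}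
    (hw : ∀ j, w j ≤ ℓ) : ∑ j, w j = ∑ x ∈ Ioc 0 ℓ, #{j | x ≤ w j} := by
  simp only [card_filter]
  rw [sum_comm]
  refine sum_congr rfl fun j _ => ?_
  have hlayers : {x ∈ Ioc 0 ℓ | x ≤ w j} = Ioc 0 (w j) := by
    ext x
    simp only [mem_filter, mem_Ioc]
    have := hw j
    omega
  rw [← card_filter, hlayers, Nat.card_Ioc, Nat.sub_zero]

noncomputable def uniformRevenue {κ : Type*} [Fintype κ] (w : κ → ℝ) (x : ℝ) : ℝ :=
  ∑ j, if x ≤ w j then x else 0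

theorem uniformRevenue_natCast {κ : Type*} [Fintype κ] (w : κ → ℕ) (x : ℕ) :
    uniformRevenue (fun j => (w j : ℝ)) x = x * #{j | x ≤ w j} := by
  simp [uniformRevenue, sum_ite, mul_comm]

theorem sum_le_one_sub_log_mul_of_uniformRevenue_le {κ : Type*} [Fintype κ] {s ℓ : ℕ}
    (hs : 1 ≤ s) (hsl : s ≤ ℓ) (w : κ → ℕ) (hw : ∀ j, s ≤ w j ∧ w j ≤ ℓ) {R : ℝ}
    (hR : ∀ x ∈ Icc s ℓ, uniformRevenue (fun j => (w j : ℝ)) x ≤ R) :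
    ∑ j, (w j : ℝ) ≤ (1 - Real.log (s / ℓ)) * R := by
  set c : ℕ → ℝ := fun x => #{j | x ≤ w j}
  have hs0 : (0 : ℝ) < s := by exact_mod_cast hs
  have hℓ0 : (0 : ℝ) < ℓ := by exact_mod_cast hs.trans hsl
  have hcR : ∀ x ∈ Icc s ℓ, x * c x ≤ R := fun x hx => by
    simpa only [uniformRevenue_natCast] using hR x hx
  have hR0 : 0 ≤ R := le_trans (by positivity) (hcR s (left_mem_Icc.2 hsl))
  have hlow : ∑ x ∈ Ioc 0 s, c x ≤ R := by
    have hc : ∀ x ∈ Ioc 0 s, c x = c s := fun x hx => by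
      simp only [c, filter_true_of_mem fun j _ => (mem_Ioc.1 hx).2.trans (hw j).1,
        filter_true_of_mem fun j _ => (hw j).1]
    rw [sum_congr rfl hc, sum_const, Nat.card_Ioc, nsmul_eq_mul, Nat.sub_zero]
    exact hcR s (left_mem_Icc.2 hsl)
  have hhigh : ∑ x ∈ Ioc s ℓ, c x ≤ R * (Real.log ℓ - Real.log s) := by
    calc ∑ x ∈ Ioc s ℓ, c x ≤ ∑ x ∈ Ioc s ℓ, R * (x : ℝ)⁻¹ := by
          refine sum_le_sum fun x hx => ?_
          have hx0 : (0 : ℝ) < x := by exact_mod_cast (hs.trans_lt (mem_Ioc.1 hx).1).le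
          rw [← div_eq_mul_inv, le_div_iff₀ hx0, mul_comm]
          exact hcR x (Ioc_subset_Icc_self hx)
      _ ≤ R * (Real.log ℓ - Real.log s) := by
          rw [← mul_sum]
          exact mul_le_mul_of_nonneg_left (sum_Ioc_inv_le_log_sub hs hsl) hR0
  have hsplit : ∑ j, (w j : ℝ) = ∑ x ∈ Ioc 0 s, c x + ∑ x ∈ Ioc s ℓ, c x := by
    rw [sum_Ioc_consecutive _ (Nat.zero_le s) hsl]
    simp only [c]
    exact_mod_cast sum_eq_sum_Ioc_card_filter_le w fun j => (hw j).2
  rw [Real.log_div hs0.ne' hℓ0.ne']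
  nlinarith

/-- The price vector `p^{S,x}`. -/
def stepPrice {n : ℕ} (S : Finset (Fin (n + 1))) (x : ℝ) (i : Fin n) : ℝ :=
  (if i.succ ∈ S then 0 else x) - (if i.castSucc ∈ S then 0 else x)

theorem sum_Icc_stepPrice {n : ℕ} (S : Finset (Fin (n + 1))) (x : ℝ) {a b : Fin n}
    (hab : a ≤ b) :
    ∑ i ∈ Icc a b, stepPrice S x i =
      (if b.succ ∈ S then 0 else x) - (if a.castSucc ∈ S then 0 else x) :=
  Fin.sum_Icc_sub hab fun k => if k ∈ S then 0 else x

theorem couponProfit_summand_stepPrice {n : ℕ} (S : Finset (Fin (n + 1))) {x w : ℝ} (hx : 0 ≤ x)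
    (hw : 0 ≤ w) {a b : Fin n} (hab : a ≤ b) :
    (if ∑ i ∈ Icc a b, stepPrice S x i ≤ w then max (∑ i ∈ Icc a b, stepPrice S x i) 0 else 0) =
      if a.castSucc ∈ S ∧ b.succ ∉ S then (if x ≤ w then x else 0) else 0 := by
  rw [sum_Icc_stepPrice S x hab]
  by_cases ha : a.castSucc ∈ S <;> by_cases hb : b.succ ∈ S <;> simp [ha, hb, hx, hw]

theorem sum_couponProfit_stepPrice {n m : ℕ} (a b : Fin m → Fin n) (hab : ∀ j, a j ≤ b j)
    (w : Fin m → ℝ) (hw : ∀ j, 0 ≤ w j) {x : ℝ} (hx : 0 ≤ x) :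
    4 * ∑ S : Finset (Fin (n + 1)), couponProfit (fun j => Icc (a j) (b j)) w (stepPrice S x) =
      2 ^ (n + 1) * uniformRevenue w x := by
  have hcustomer : ∀ j, 4 * ∑ S : Finset (Fin (n + 1)),
      (if ∑ i ∈ Icc (a j) (b j), stepPrice S x i ≤ w j
        then max (∑ i ∈ Icc (a j) (b j), stepPrice S x i) 0 else 0) =
      2 ^ (n + 1) * if x ≤ w j then x else 0 := fun j => by
    have huv : (a j).castSucc ≠ (b j).succ :=
      ((Fin.castSucc_le_castSucc_iff.2 (hab j)).trans_lt (b j).castSucc_lt_succ).ne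
    have hcount := card_filter_mem_and_notMem_mul_four huv
    rw [Fintype.card_fin] at hcount
    rw [sum_congr rfl fun S _ => couponProfit_summand_stepPrice S hx (hw j) (hab j), ← sum_filter,
      sum_const, nsmul_eq_mul, ← mul_assoc]
    exact_mod_cast congrArg (fun k : ℕ => (k : ℝ) * if x ≤ w j then x else 0) hcount
  unfold couponProfit
  rw [sum_comm, mul_sum, uniformRevenue, mul_sum]
  exact sum_congr rfl fun j _ => hcustomer j

theorem stmt_8_general (n m s ℓ : ℕ) (hs : 1 ≤ s) (hsl : s ≤ ℓ)
    (a b : Fin m → Fin n) (hab : ∀ j, a j ≤ b j)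
    (w : Fin m → ℕ) (hw : ∀ j, s ≤ w j ∧ w j ≤ ℓ)
    (q : Fin n → ℝ) :
    (1 / (2 : ℝ) ^ (n + 1)) *
        ∑ S : Finset (Fin (n + 1)),
          (Finset.Icc s ℓ).sup' (Finset.nonempty_Icc.2 hsl) (fun x =>
            couponProfit (fun j => Finset.Icc (a j) (b j)) (fun j => (w j : ℝ))
              (fun i => (if i.succ ∈ S then (0 : ℝ) else (x : ℝ)) -
                (if i.castSucc ∈ S then (0 : ℝ) else (x : ℝ)))) ≥
      couponProfit (fun j => Finset.Icc (a j) (b j)) (fun j => (w j : ℝ)) q /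
        (4 * (1 - Real.log ((s : ℝ) / (ℓ : ℝ)))) := by
  obtain ⟨x₀, hx₀, hbest⟩ := exists_max_image (Icc s ℓ)
    (fun x : ℕ => uniformRevenue (fun j => (w j : ℝ)) x) (nonempty_Icc.2 hsl)
  have hprofit := couponProfit_le_sum (fun j => Icc (a j) (b j)) _ (fun j => (w j).cast_nonneg) q
  have hsingle := sum_le_one_sub_log_mul_of_uniformRevenue_le hs hsl w hw hbest
  have haverage := sum_couponProfit_stepPrice a b hab (fun j => (w j : ℝ))
    (fun j => (w j).cast_nonneg) x₀.cast_nonneg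
  have hlog : 0 < 1 - Real.log ((s : ℝ) / ℓ) := by
    have : Real.log ((s : ℝ) / ℓ) ≤ 0 :=
      Real.log_nonpos (by positivity) (div_le_one_of_le₀ (by exact_mod_cast hsl) (by positivity))
    linarith
  rw [ge_iff_le, div_le_iff₀ (by positivity)]
  calc couponProfit (fun j => Icc (a j) (b j)) (fun j => (w j : ℝ)) q
      ≤ (1 - Real.log ((s : ℝ) / ℓ)) * uniformRevenue (fun j => (w j : ℝ)) x₀ :=
        hprofit.trans hsingle
    _ = (1 / 2 ^ (n + 1) * ∑ S : Finset (Fin (n + 1)),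
          couponProfit (fun j => Icc (a j) (b j)) (fun j => (w j : ℝ)) (stepPrice S x₀)) *
            (4 * (1 - Real.log ((s : ℝ) / ℓ))) := by
        rw [eq_div_of_mul_eq (by positivity) ((mul_comm _ _).trans haverage.symm)]
        ring
    _ ≤ _ := by
        refine mul_le_mul_of_nonneg_right (mul_le_mul_of_nonneg_left (sum_le_sum fun S _ => ?_)
          (by positivity)) (by positivity)
        exact le_sup' (fun x : ℕ => couponProfit (fun j => Icc (a j) (b j)) (fun j => (w j : ℝ))
          (stepPrice S x)) hx₀

/-- For a reduced instance of the line highway problem with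
`[s,ℓ]`-valuation on `n ≥ 1` items, and for a subset `S ⊆ {0,…,n}` (realized
as `S : Finset (Fin (n+1))`) and an integer `x ∈ [s,ℓ]`, define partial sums
`σ_i = 0` for `i ∈ S`, `σ_i = x` for `i ∉ S`, and the price vector
`p^{S,x}_i = σ_i - σ_{i-1}`.  The average over all `2^{n+1}` subsets `S` of
`max_{s ≤ x ≤ ℓ} Profit(p^{S,x})` is at least
`Profit(q) / (4(1 - ln(s/ℓ)))` for every price vector `q ∈ ℝ^n`. -/
theorem stmt_8 (n m s ℓ : ℕ) (hn : 1 ≤ n) (hs : 1 ≤ s) (hsl : s ≤ ℓ)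
    (a b : Fin m → Fin n) (hab : ∀ j, a j ≤ b j)
    (w : Fin m → ℕ) (hw : ∀ j, s ≤ w j ∧ w j ≤ ℓ)
    (q : Fin n → ℝ) :
    (1 / (2 : ℝ) ^ (n + 1)) *
        ∑ S : Finset (Fin (n + 1)),
          (Finset.Icc s ℓ).sup' (Finset.nonempty_Icc.2 hsl) (fun x =>
            couponProfit (fun j => Finset.Icc (a j) (b j)) (fun j => (w j : ℝ))
              (fun i => (if i.succ ∈ S then (0 : ℝ) else (x : ℝ)) -
                (if i.castSucc ∈ S then (0 : ℝ) else (x : ℝ)))) ≥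
      couponProfit (fun j => Finset.Icc (a j) (b j)) (fun j => (w j : ℝ)) q /
        (4 * (1 - Real.log ((s : ℝ) / (ℓ : ℝ)))) :=
  stmt_8_general n m s ℓ hs hsl a b hab w hw q
end
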